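/- arXiv:math/0506148 — 6 statements merged into one kernel-verified Lean document; each statement's English description precedes it below -/
import Mathlib

section
/- Let X be a connected topological space, E a finite-dimensional real normed vector space, and P : X → (E →L[ℝ] E) a continuous map such that (P x) ∘ (P x) = P x for every x ∈ X. Then the function x ↦ finrank ℝ (range (P x)) is constant on X; i.e., for all x, y ∈ X the ranges of P x and P y have the same dimension. -/
/-!
The trace of a projector equals the dimension of its range. The trace is continuous, so the
rank of a continuous field of projectors is a continuous function into the discrete space `ℕ`,
hence constant on a connected space.
-/

open LinearMap Module

theorem IsIdempotentElem.trace_eq_finrank_range {K V : Type*} [Field K] [AddCommGroup V]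
    [Module K V] [FiniteDimensional K V] {e : V →ₗ[K] V} (he : IsIdempotentElem e) :
    trace K V e = finrank K (range e) :=
  he.isProj_range.trace

theorem ContinuousLinearMap.continuous_trace {𝕜 E : Type*} [NontriviallyNormedField 𝕜]
    [CompleteSpace 𝕜] [NormedAddCommGroup E] [NormedSpace 𝕜 E] [FiniteDimensional 𝕜 E] :
    Continuous fun f : E →L[𝕜] E => trace 𝕜 E f :=
  ((trace 𝕜 E).comp (ContinuousLinearMap.coeLM 𝕜)).continuous_of_finiteDimensional

theorem continuous_finrank_range_of_isIdempotentElem {X E : Type*} [TopologicalSpace X]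
    [NormedAddCommGroup E] [NormedSpace ℝ E] [FiniteDimensional ℝ E]
    {P : X → E →L[ℝ] E} (hP : Continuous P) (hidem : ∀ x, IsIdempotentElem (P x)) :
    Continuous fun x => finrank ℝ (range (P x).toLinearMap) := by
  have htrace : ∀ x, trace ℝ E (P x) = finrank ℝ (range (P x).toLinearMap) := fun x =>
    ((hidem x).map ContinuousLinearMap.toLinearMapRingHom).trace_eq_finrank_range
  rw [Nat.isClosedEmbedding_coe_real.continuous_iff]
  simpa only [Function.comp_def, ← htrace] using ContinuousLinearMap.continuous_trace.comp hP

/-- A continuous field of idempotent continuous linear endomorphisms (projectors)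
of a finite-dimensional real normed vector space over a connected topological space
has constant range dimension. -/
theorem constant_rank_of_continuous_projectors
    {X : Type*} [TopologicalSpace X] [ConnectedSpace X]
    {E : Type*} [NormedAddCommGroup E] [NormedSpace ℝ E] [FiniteDimensional ℝ E]
    (P : X → E →L[ℝ] E) (hP : Continuous P)
    (hidem : ∀ x, (P x).comp (P x) = P x) :
    ∀ x y : X, Module.finrank ℝ (LinearMap.range (P x).toLinearMap) =
      Module.finrank ℝ (LinearMap.range (P y).toLinearMap) := fun _ _ =>
  PreconnectedSpace.constant inferInstance (continuous_finrank_range_of_isIdempotentElem hP hidem)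
end

section
/- With the projector-derivative setup below, the following equivalence holds (equations (assertion0) ⟺ (25) of the paper): (∀ a b c, M a b c = (1/p) * E a * P b c − (1/(n−p)) * W a * Π b c) if and only if (∀ a b c, (D b) a c = (1/(2p)) * (E a * P b c + E c * P a b) − (1/(2(n−p))) * (W a * Π b c + W c * Π b a)). -/
/-!
`M` is the Koszul combination of `D` that produces Christoffel symbols from metric derivatives.
Since each `D a` is symmetric, it can be inverted:
`M a b c + M c a b = 2 D b a c`. Hence prescribing `M a b c = F a b c` with `F` symmetric in its last
two slots is the same as prescribing `D b a c = (F a b c + F c a b) / 2`, and (25) is this formula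
for the right-hand side `F` of (assertion0).
-/

open Matrix

section Koszul

variable {ι K : Type*} [Field K] {D : ι → Matrix ι ι K} {M : ι → ι → ι → K}

theorem koszul_add_koszul_rotate (hD : ∀ a, (D a).IsSymm)
    (hM : ∀ a b c, M a b c = D b a c + D c a b - D a b c) (a b c : ι) :
    M a b c + M c a b = 2 * D b a c := by
  rw [hM, hM, (hD a).apply b c, (hD b).apply a c]
  ring

theorem koszul_eq_iff [NeZero (2 : K)] (hD : ∀ a, (D a).IsSymm)
    (hM : ∀ a b c, M a b c = D b a c + D c a b - D a b c)
    {F : ι → ι → ι → K} (hF : ∀ a b c, F a b c = F a c b) :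
    (∀ a b c, M a b c = F a b c) ↔ ∀ a b c, D b a c = (F a b c + F c a b) / 2 := by
  constructor
  · intro hMF a b c
    rw [← hMF, ← hMF, koszul_add_koszul_rotate hD hM]
    field_simp
  · intro hDF a b c
    rw [hM, hDF, hDF, hDF, hF c b a, hF b a c, hF a c b]
    field_simp
    ring

end Koszul

theorem biconformal_assertion0_iff_25_general
    {n : ℕ}
    (G P Q : Matrix (Fin n) (Fin n) ℝ)
    (hGsym : G.IsSymm)
    (hPsym : P.IsSymm) (hQ : Q = G - P)
    (p : ℝ)
    (D : Fin n → Matrix (Fin n) (Fin n) ℝ) (hD : ∀ a, (D a).IsSymm)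
    (M : Fin n → Fin n → Fin n → ℝ)
    (hM : ∀ a b c, M a b c = D b a c + D c a b - D a b c)
    (E W : Fin n → ℝ) :
    (∀ a b c, M a b c = (1 / p) * E a * P b c - (1 / ((n : ℝ) - p)) * W a * Q b c) ↔
    (∀ a b c, D b a c = (1 / (2 * p)) * (E a * P b c + E c * P a b)
      - (1 / (2 * ((n : ℝ) - p))) * (W a * Q b c + W c * Q b a)) := by
  have hQsym : Q.IsSymm := hQ ▸ hGsym.sub hPsym
  set F : Fin n → Fin n → Fin n → ℝ :=
    fun a b c => 1 / p * E a * P b c - 1 / ((n : ℝ) - p) * W a * Q b c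
  have hF : ∀ a b c, F a b c = F a c b := fun a b c => by
    simp only [F, hPsym.apply b c, hQsym.apply b c]
  refine (koszul_eq_iff hD hM hF).trans (forall₃_congr fun a b c => ?_)
  rw [hQsym.apply a b, one_div (2 * p), one_div (2 * _), mul_inv, mul_inv]
  simp only [F]
  ring_nf

/-- Equivalence of equations (assertion0) and (25) of the paper:
`M_{abc} = (1/p) E_a P_{bc} - (1/(n-p)) W_a Π_{bc}` iff
`∇_b P_{ac} = (1/(2p))(E_a P_{bc} + E_c P_{ab}) - (1/(2(n-p)))(W_a Π_{bc} + W_c Π_{ba})`. -/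
theorem biconformal_assertion0_iff_25
    {n : ℕ} (hn : 1 ≤ n)
    (G P Q : Matrix (Fin n) (Fin n) ℝ)
    (hGsym : G.IsSymm) (hGinv : IsUnit G.det)
    (hPsym : P.IsSymm) (hQ : Q = G - P)
    (hPP : P * G⁻¹ * P = P) (hQQ : Q * G⁻¹ * Q = Q) (hPQ : P * G⁻¹ * Q = 0)
    (p : ℝ) (hp : p = (G⁻¹ * P).trace) (hp0 : p ≠ 0) (hnp : (n : ℝ) - p ≠ 0)
    (D : Fin n → Matrix (Fin n) (Fin n) ℝ) (hD : ∀ a, (D a).IsSymm)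
    (M : Fin n → Fin n → Fin n → ℝ)
    (hM : ∀ a b c, M a b c = D b a c + D c a b - D a b c)
    (E W : Fin n → ℝ)
    (hE : ∀ a, E a = ∑ b, ∑ c, M a b c * (G⁻¹ * P * G⁻¹) b c)
    (hW : ∀ a, W a = -∑ b, ∑ c, M a b c * (G⁻¹ * Q * G⁻¹) b c) :
    (∀ a b c, M a b c = (1 / p) * E a * P b c - (1 / ((n : ℝ) - p)) * W a * Q b c) ↔
    (∀ a b c, D b a c = (1 / (2 * p)) * (E a * P b c + E c * P a b)
      - (1 / (2 * ((n : ℝ) - p))) * (W a * Q b c + W c * Q b a)) :=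
  biconformal_assertion0_iff_25_general G P Q hGsym hPsym hQ p D hD M hM E W
end

section
/- With the curvature setup below, for all a, b one has L⁰ a b − L⁰ b a = (2*(2−p)/p) * Σ_{r,q} (Pm r q * R q r a b). (This is equation (uno) of the paper: L⁰_{ab} − L⁰_{ba} = (2(2−p)/p) P^r_q R̄^q_{rab}, obtained from the definition of L⁰ and the first Bianchi identity.) -/
/-!
In `L⁰_{ab} - L⁰_{ba}` the terms built from `P` and from `Pm ⬝ F` are symmetric in `a, b` and
cancel. Of the rest, antisymmetry of `R̄` gives `F_{ba} = -F_{ab}` and the first Bianchi identity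
gives `A_{ba} = A_{ab} - F_{ab}`, so the difference is `-2 F_{ab} + (4/p) F_{ab}`.
-/

theorem curvature_swap_of_bianchi {ι α : Type*} [AddCommGroup α] {R : ι → ι → ι → ι → α}
    (hanti : ∀ a b c d, R a b c d = -R a b d c)
    (hbianchi : ∀ a b c d, R a b c d + R a c d b + R a d b c = 0) (r a b d : ι) :
    R r b d a = R r a d b - R r d a b := by
  have h := hbianchi r a b d
  rw [hanti r a b d] at h
  rw [← sub_eq_zero, ← h]
  abel

section CurvatureContractions

variable {ι α : Type*} [Fintype ι] [NonUnitalNonAssocRing α] {R : ι → ι → ι → ι → α}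

theorem sum_contract_antisymm (hanti : ∀ a b c d, R a b c d = -R a b d c) (M : Matrix ι ι α)
    (a b : ι) : ∑ r, ∑ q, M r q * R q r b a = -∑ r, ∑ q, M r q * R q r a b := by
  simp only [hanti _ _ b a, mul_neg, Finset.sum_neg_distrib]

theorem sum_contract_swap_of_bianchi (hanti : ∀ a b c d, R a b c d = -R a b d c)
    (hbianchi : ∀ a b c d, R a b c d + R a c d b + R a d b c = 0) (M : Matrix ι ι α) (a b : ι) :
    ∑ d, ∑ r, M d r * R r b d a =
      ∑ d, ∑ r, M d r * R r a d b - ∑ r, ∑ q, M r q * R q r a b := by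
  simp_rw [← Finset.sum_sub_distrib, ← mul_sub]
  exact Finset.sum_congr rfl fun d _ => Finset.sum_congr rfl fun r _ => by
    rw [curvature_swap_of_bianchi hanti hbianchi]

end CurvatureContractions

theorem L0_antisymmetric_part_general
    {n : ℕ}
    (P : Matrix (Fin n) (Fin n) ℝ)
    (hPsym : P.IsSymm)
    (Pm : Matrix (Fin n) (Fin n) ℝ)
    (p : ℝ) (hp0 : p ≠ 0)
    (R : Fin n → Fin n → Fin n → Fin n → ℝ)
    (hanti : ∀ a b c d, R a b c d = -R a b d c)
    (hbianchi : ∀ a b c d, R a b c d + R a c d b + R a d b c = 0)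
    (F A : Fin n → Fin n → ℝ)
    (hF : ∀ d b, F d b = ∑ r, ∑ q, Pm r q * R q r d b)
    (hA : ∀ c b, A c b = ∑ d, ∑ r, Pm d r * R r c d b)
    (R0 : ℝ)
    (L0 : Fin n → Fin n → ℝ)
    (hL0 : ∀ b c, L0 b c = 2 * (A c b - (1 / p) *
      ((∑ d, Pm d c * F d b) + (∑ d, Pm d b * F d c) - F b c)) +
      (R0 / (1 - p)) * P b c) :
    ∀ a b, L0 a b - L0 b a = (2 * (2 - p) / p) * ∑ r, ∑ q, Pm r q * R q r a b := by
  intro a b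
  have hFba : F b a = -F a b := by
    rw [hF, hF, sum_contract_antisymm hanti]
  have hAba : A b a = A a b - F a b := by
    rw [hA, hA, hF, sum_contract_swap_of_bianchi hanti hbianchi]
  rw [hL0 a b, hL0 b a, hPsym.apply a b, hAba, hFba, ← hF a b]
  field_simp
  ring

/-- Equation (uno) of the paper: the antisymmetric part of `L⁰` satisfies
`L⁰_{ab} - L⁰_{ba} = (2(2-p)/p) P^r_q R̄^q_{rab}`. -/
theorem L0_antisymmetric_part
    {n : ℕ} (hn : 1 ≤ n)
    (G P : Matrix (Fin n) (Fin n) ℝ)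
    (hGsym : G.IsSymm) (hGinv : IsUnit G.det)
    (hPsym : P.IsSymm) (hPP : P * G⁻¹ * P = P)
    (Pm : Matrix (Fin n) (Fin n) ℝ) (hPm : Pm = G⁻¹ * P)
    (p : ℝ) (hp : p = Pm.trace) (hp0 : p ≠ 0) (hp1 : p ≠ 1)
    (R : Fin n → Fin n → Fin n → Fin n → ℝ)
    (hanti : ∀ a b c d, R a b c d = -R a b d c)
    (hbianchi : ∀ a b c d, R a b c d + R a c d b + R a d b c = 0)
    (F A : Fin n → Fin n → ℝ)
    (hF : ∀ d b, F d b = ∑ r, ∑ q, Pm r q * R q r d b)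
    (hA : ∀ c b, A c b = ∑ d, ∑ r, Pm d r * R r c d b)
    (R0 : ℝ) (hR0 : R0 = ∑ c, ∑ b, A c b * (G⁻¹ * P * G⁻¹) c b)
    (L0 : Fin n → Fin n → ℝ)
    (hL0 : ∀ b c, L0 b c = 2 * (A c b - (1 / p) *
      ((∑ d, Pm d c * F d b) + (∑ d, Pm d b * F d c) - F b c)) +
      (R0 / (1 - p)) * P b c) :
    ∀ a b, L0 a b - L0 b a = (2 * (2 - p) / p) * ∑ r, ∑ q, Pm r q * R q r a b :=
  L0_antisymmetric_part_general P hPsym Pm p hp0 R hanti hbianchi F A hF hA R0 L0 hL0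
end

section
/- Let ι be a type, p : ℝ with p ≠ 0 and p ≠ 3, and S : ι → ι → ι → ℝ a family satisfying, for all c, t, z ∈ ι, (S c t z − S t c z) + (S z c t − S c z t) + (p − 2) * (S t z c − S z t c) = 0. Then S is symmetric in its first two arguments: S a b c = S b a c for all a, b, c ∈ ι. -/
/-! The antisymmetric parts `S a b c - S b a c`, `S b c a - S c b a`, `S c a b - S a c b` of `S`
at the three cyclic rotations of `(a, b, c)` solve a homogeneous circulant system with
coefficients `1, 1, p - 2`, whose determinant `p (p - 3)²` does not vanish. -/

theorem eq_zero_of_cyclic_system {R : Type*} [CommRing R] [NoZeroDivisors R] {k x y z : R}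
    (hk1 : k ≠ 1) (hk2 : k + 2 ≠ 0)
    (hx : x + z + k * y = 0) (hy : y + x + k * z = 0) (hz : z + y + k * x = 0) :
    x = 0 := by
  have hk1' : 1 - k ≠ 0 := sub_ne_zero.mpr hk1.symm
  have hxy : x - y = 0 :=
    (mul_eq_zero.mp (by linear_combination hx - hz : (1 - k) * (x - y) = 0)).resolve_left hk1'
  have hxz : x - z = 0 :=
    (mul_eq_zero.mp (by linear_combination hy - hz : (1 - k) * (x - z) = 0)).resolve_left hk1'
  exact (mul_eq_zero.mp
    (by linear_combination hz + hxy + hxz : (k + 2) * x = 0)).resolve_left hk2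

/-- The permutation argument in Lemma (long-lema) of Section 4: if
`S_{ctz} - S_{tcz} + S_{zct} - S_{czt} + (p-2)(S_{tzc} - S_{ztc}) = 0` for all
indices and `p ≠ 0, 3`, then `S` is symmetric in its first two arguments. -/
theorem S_symmetric_of_cyclic_relation
    {ι : Type*} (p : ℝ) (hp0 : p ≠ 0) (hp3 : p ≠ 3)
    (S : ι → ι → ι → ℝ)
    (hS : ∀ c t z, (S c t z - S t c z) + (S z c t - S c z t)
      + (p - 2) * (S t z c - S z t c) = 0) :
    ∀ a b c, S a b c = S b a c := by
  intro a b c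
  have hk1 : p - 2 ≠ 1 := fun h => hp3 (by linarith)
  have hk2 : p - 2 + 2 ≠ 0 := by rwa [sub_add_cancel]
  exact sub_eq_zero.mp (eq_zero_of_cyclic_system hk1 hk2 (hS a b c) (hS b c a) (hS c a b))
end

section
/- With the conformally separable metric setup and the leaf projector P below, for every z ∈ ℝ^p × ℝ^q the tensor M satisfies M (inr A) (inl α) (inl β) (z) = −(∂_{inr A} (fun w => Ξ₁ w * G (w.1) α β))(z) and M (inl α) (inr A) (inr B) (z) = (∂_{inl α} (fun w => Ξ₂ w * H (w.2) A B))(z). (These are the component formulas (27) of the paper: M_{A αβ} = −∂_A(Ξ₁ G_{αβ}) and M_{α AB} = ∂_α(Ξ₂ G_{AB}).) -/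
/-!
For a torsion-free connection and a symmetric tensor `P`, the combination
`M_{abc} = ∇_b P_{ac} + ∇_c P_{ab} - ∇_a P_{bc}` collapses to
`∂_b P_{ac} + ∂_c P_{ab} - ∂_a P_{bc} - 2 P_{ar} Γ^r_{bc}`. The leaf projector has vanishing
`inr` rows, which gives the first formula at once. Its `inl` rows agree with those of `g`, so in
the second formula `P_{αr} Γ^r_{AB}` is the Christoffel symbol of the first kind
`½ (∂_A g_{αB} + ∂_B g_{αA} - ∂_α g_{AB}) = -½ ∂_α g_{AB}`, the mixed blocks of `g` being zero.
-/

open Sum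

/-- Directional derivative along the `a`-th standard basis vector of `ℝ^p × ℝ^q`. -/
noncomputable def pder {p q : ℕ} (a : Fin p ⊕ Fin q)
    (f : ((Fin p → ℝ) × (Fin q → ℝ)) → ℝ) (z : (Fin p → ℝ) × (Fin q → ℝ)) : ℝ :=
  fderiv ℝ f z (Sum.elim (fun α => (Pi.single α 1, 0)) (fun A => (0, Pi.single A 1)) a)

open Matrix

section CovariantDerivative

variable {ι X R : Type*} [Fintype ι] [CommRing R] (D : ι → (X → R) → X → R)

def covDeriv (Γ : ι → ι → ι → X → R) (P : X → Matrix ι ι R) (a b c : ι) (z : X) : R :=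
  D a (fun w => P w b c) z - (∑ r, Γ r a b z * P z r c) - ∑ r, Γ r a c z * P z b r

theorem covDeriv_add_covDeriv_sub_covDeriv {Γ : ι → ι → ι → X → R} {P : X → Matrix ι ι R}
    (hΓ : ∀ r a b z, Γ r a b z = Γ r b a z) (hP : ∀ z, (P z).IsSymm) (a b c : ι) (z : X) :
    covDeriv D Γ P b a c z + covDeriv D Γ P c a b z - covDeriv D Γ P a b c z =
      D b (fun w => P w a c) z + D c (fun w => P w a b) z - D a (fun w => P w b c) z
        - 2 * ∑ r, P z a r * Γ r b c z := by
  have hba : ∑ r, Γ r b a z * P z r c = ∑ r, Γ r a b z * P z r c := by simp only [hΓ _ b a]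
  have hca : ∑ r, Γ r c a z * P z r b = ∑ r, Γ r a c z * P z b r := by
    simp only [hΓ _ c a, (hP z).apply b]
  have hcb : ∑ r, Γ r c b z * P z a r = ∑ r, P z a r * Γ r b c z := by
    simp only [hΓ _ c b, mul_comm]
  have hbc : ∑ r, Γ r b c z * P z a r = ∑ r, P z a r * Γ r b c z := by simp only [mul_comm]
  simp only [covDeriv]
  rw [hba, hca, hcb, hbc]
  ring

end CovariantDerivative

section Christoffel

variable {ι X R : Type*} [Fintype ι] [DecidableEq ι] [Field R]
  (D : ι → (X → R) → X → R)

noncomputable def christoffel (g : X → Matrix ι ι R) (a b c : ι) (z : X) : R :=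
  (1 / 2) * ∑ d, (g z)⁻¹ a d *
    (D b (fun w => g w d c) z + D c (fun w => g w d b) z - D d (fun w => g w b c) z)

theorem christoffel_comm {g : X → Matrix ι ι R} (hg : ∀ z, (g z).IsSymm) (a b c : ι) (z : X) :
    christoffel D g a b c z = christoffel D g a c b z := by
  have hbc : (fun w => g w b c) = fun w => g w c b := funext fun w => (hg w).apply c b
  simp only [christoffel, hbc, add_comm]

theorem sum_mul_christoffel {g : X → Matrix ι ι R} {z : X} (hg : IsUnit (g z).det) (a b c : ι) :
    ∑ r, g z a r * christoffel D g r b c z =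
      (1 / 2) * (D b (fun w => g w a c) z + D c (fun w => g w a b) z
        - D a (fun w => g w b c) z) := by
  set E : ι → R := fun d =>
    D b (fun w => g w d c) z + D c (fun w => g w d b) z - D d (fun w => g w b c) z
  have hΓ : ∀ r, christoffel D g r b c z = (1 / 2) * ((g z)⁻¹ *ᵥ E) r := fun _ => rfl
  calc ∑ r, g z a r * christoffel D g r b c z = (1 / 2) * (g z *ᵥ ((g z)⁻¹ *ᵥ E)) a := by
        simp only [hΓ, mulVec, dotProduct, Finset.mul_sum]
        exact Finset.sum_congr rfl fun _ _ => Finset.sum_congr rfl fun _ _ => by ring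
    _ = (1 / 2) * E a := by rw [mulVec_mulVec, mul_nonsing_inv _ hg, one_mulVec]

end Christoffel

theorem isUnit_det_fromBlocks_smul {m n R : Type*} [Fintype m] [Fintype n] [DecidableEq m]
    [DecidableEq n] [CommRing R] {a b : R} {A : Matrix m m R} {B : Matrix n n R}
    (ha : IsUnit a) (hb : IsUnit b) (hA : IsUnit A.det) (hB : IsUnit B.det) :
    IsUnit (fromBlocks (a • A) 0 0 (b • B)).det := by
  rw [det_fromBlocks_zero₁₂, det_smul, det_smul]
  exact ((ha.pow _).mul hA).mul ((hb.pow _).mul hB)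

theorem pder_const {p q : ℕ} (a : Fin p ⊕ Fin q) (c : ℝ) (z : (Fin p → ℝ) × (Fin q → ℝ)) :
    pder a (fun _ => c) z = 0 := by
  simp [pder]

theorem M_components_conformally_separable_general
    {p q : ℕ}
    (Ξ₁ Ξ₂ : ((Fin p → ℝ) × (Fin q → ℝ)) → ℝ)
    (hΞ₁0 : ∀ z, Ξ₁ z ≠ 0) (hΞ₂0 : ∀ z, Ξ₂ z ≠ 0)
    (G : (Fin p → ℝ) → Matrix (Fin p) (Fin p) ℝ)
    (H : (Fin q → ℝ) → Matrix (Fin q) (Fin q) ℝ)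
    (hGsym : ∀ x, (G x).IsSymm) (hGinv : ∀ x, IsUnit (G x).det)
    (hHsym : ∀ y, (H y).IsSymm) (hHinv : ∀ y, IsUnit (H y).det)
    (g : ((Fin p → ℝ) × (Fin q → ℝ)) → Matrix (Fin p ⊕ Fin q) (Fin p ⊕ Fin q) ℝ)
    (hg₁ : ∀ z α β, g z (inl α) (inl β) = Ξ₁ z * G z.1 α β)
    (hg₂ : ∀ z A B, g z (inr A) (inr B) = Ξ₂ z * H z.2 A B)
    (hg₃ : ∀ z α A, g z (inl α) (inr A) = 0)
    (hg₄ : ∀ z A α, g z (inr A) (inl α) = 0)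
    (Γ : (Fin p ⊕ Fin q) → (Fin p ⊕ Fin q) → (Fin p ⊕ Fin q) →
      ((Fin p → ℝ) × (Fin q → ℝ)) → ℝ)
    (hΓ : ∀ a b c z, Γ a b c z = (1 / 2) * ∑ d, (g z)⁻¹ a d *
      (pder b (fun w => g w d c) z + pder c (fun w => g w d b) z -
        pder d (fun w => g w b c) z))
    (P : ((Fin p → ℝ) × (Fin q → ℝ)) → Matrix (Fin p ⊕ Fin q) (Fin p ⊕ Fin q) ℝ)
    (hP₁ : ∀ z α β, P z (inl α) (inl β) = Ξ₁ z * G z.1 α β)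
    (hP₂ : ∀ z A B, P z (inr A) (inr B) = 0)
    (hP₃ : ∀ z α A, P z (inl α) (inr A) = 0)
    (hP₄ : ∀ z A α, P z (inr A) (inl α) = 0)
    (nab : (Fin p ⊕ Fin q) → (Fin p ⊕ Fin q) → (Fin p ⊕ Fin q) →
      ((Fin p → ℝ) × (Fin q → ℝ)) → ℝ)
    (hnab : ∀ a b c z, nab a b c z = pder a (fun w => P w b c) z
      - (∑ r, Γ r a b z * P z r c) - ∑ r, Γ r a c z * P z b r)
    (M : (Fin p ⊕ Fin q) → (Fin p ⊕ Fin q) → (Fin p ⊕ Fin q) →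
      ((Fin p → ℝ) × (Fin q → ℝ)) → ℝ)
    (hM : ∀ a b c z, M a b c z = nab b a c z + nab c a b z - nab a b c z) :
    (∀ z (A : Fin q) (α β : Fin p), M (inr A) (inl α) (inl β) z =
      -pder (inr A) (fun w => Ξ₁ w * G w.1 α β) z) ∧
    (∀ z (α : Fin p) (A B : Fin q), M (inl α) (inr A) (inr B) z =
      pder (inl α) (fun w => Ξ₂ w * H w.2 A B) z) := by
  obtain rfl : Γ = christoffel pder g := by funext a b c z; exact hΓ a b c z
  obtain rfl : nab = covDeriv pder (christoffel pder g) P := by funext a b c z; exact hnab a b c z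
  have hg : ∀ z, g z = fromBlocks (Ξ₁ z • G z.1) 0 0 (Ξ₂ z • H z.2) := fun z =>
    Matrix.ext <| by rintro (α | A) (β | B) <;> simp [hg₁, hg₂, hg₃, hg₄]
  have hPsymm : ∀ z, (P z).IsSymm := fun z => IsSymm.ext <| by
    rintro (α | A) (β | B) <;> simp [hP₁, hP₂, hP₃, hP₄, (hGsym z.1).apply]
  have hΓsymm := christoffel_comm pder fun z =>
    hg z ▸ ((hGsym z.1).smul _).fromBlocks transpose_zero ((hHsym z.2).smul _)
  have hM' := covDeriv_add_covDeriv_sub_covDeriv pder hΓsymm hPsymm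
  refine ⟨fun z A α β => ?_, fun z α A B => ?_⟩
  · have hProw : ∀ r, P z (inr A) r = 0 := by rintro (β | B) <;> simp [hP₂, hP₄]
    simp [hM, hM', hProw, hP₁, hP₄, pder_const]
  · have hProw : ∀ r, P z (inl α) r = g z (inl α) r := by
      rintro (β | B) <;> simp [hP₁, hP₃, hg₁, hg₃]
    have hgz : IsUnit (g z).det := hg z ▸ isUnit_det_fromBlocks_smul (hΞ₁0 z).isUnit
      (hΞ₂0 z).isUnit (hGinv z.1) (hHinv z.2)
    simp only [hM, hM', hProw, sum_mul_christoffel pder hgz, hP₂, hP₃, hg₂, hg₃, pder_const]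
    ring

/-- The component formulas (27) of the paper for a conformally separable metric:
`M_{Aαβ} = -∂_A(Ξ₁ G_{αβ})` and `M_{αAB} = ∂_α(Ξ₂ G_{AB})`. -/
theorem M_components_conformally_separable
    {p q : ℕ} (hp : 1 ≤ p) (hq : 1 ≤ q)
    (Ξ₁ Ξ₂ : ((Fin p → ℝ) × (Fin q → ℝ)) → ℝ)
    (hΞ₁ : ContDiff ℝ 2 Ξ₁) (hΞ₂ : ContDiff ℝ 2 Ξ₂)
    (hΞ₁0 : ∀ z, Ξ₁ z ≠ 0) (hΞ₂0 : ∀ z, Ξ₂ z ≠ 0)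
    (G : (Fin p → ℝ) → Matrix (Fin p) (Fin p) ℝ)
    (H : (Fin q → ℝ) → Matrix (Fin q) (Fin q) ℝ)
    (hG : ∀ α β, ContDiff ℝ 2 (fun x => G x α β))
    (hH : ∀ A B, ContDiff ℝ 2 (fun y => H y A B))
    (hGsym : ∀ x, (G x).IsSymm) (hGinv : ∀ x, IsUnit (G x).det)
    (hHsym : ∀ y, (H y).IsSymm) (hHinv : ∀ y, IsUnit (H y).det)
    (g : ((Fin p → ℝ) × (Fin q → ℝ)) → Matrix (Fin p ⊕ Fin q) (Fin p ⊕ Fin q) ℝ)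
    (hg₁ : ∀ z α β, g z (inl α) (inl β) = Ξ₁ z * G z.1 α β)
    (hg₂ : ∀ z A B, g z (inr A) (inr B) = Ξ₂ z * H z.2 A B)
    (hg₃ : ∀ z α A, g z (inl α) (inr A) = 0)
    (hg₄ : ∀ z A α, g z (inr A) (inl α) = 0)
    (Γ : (Fin p ⊕ Fin q) → (Fin p ⊕ Fin q) → (Fin p ⊕ Fin q) →
      ((Fin p → ℝ) × (Fin q → ℝ)) → ℝ)
    (hΓ : ∀ a b c z, Γ a b c z = (1 / 2) * ∑ d, (g z)⁻¹ a d *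
      (pder b (fun w => g w d c) z + pder c (fun w => g w d b) z -
        pder d (fun w => g w b c) z))
    (P : ((Fin p → ℝ) × (Fin q → ℝ)) → Matrix (Fin p ⊕ Fin q) (Fin p ⊕ Fin q) ℝ)
    (hP₁ : ∀ z α β, P z (inl α) (inl β) = Ξ₁ z * G z.1 α β)
    (hP₂ : ∀ z A B, P z (inr A) (inr B) = 0)
    (hP₃ : ∀ z α A, P z (inl α) (inr A) = 0)
    (hP₄ : ∀ z A α, P z (inr A) (inl α) = 0)
    (nab : (Fin p ⊕ Fin q) → (Fin p ⊕ Fin q) → (Fin p ⊕ Fin q) →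
      ((Fin p → ℝ) × (Fin q → ℝ)) → ℝ)
    (hnab : ∀ a b c z, nab a b c z = pder a (fun w => P w b c) z
      - (∑ r, Γ r a b z * P z r c) - ∑ r, Γ r a c z * P z b r)
    (M : (Fin p ⊕ Fin q) → (Fin p ⊕ Fin q) → (Fin p ⊕ Fin q) →
      ((Fin p → ℝ) × (Fin q → ℝ)) → ℝ)
    (hM : ∀ a b c z, M a b c z = nab b a c z + nab c a b z - nab a b c z) :
    (∀ z (A : Fin q) (α β : Fin p), M (inr A) (inl α) (inl β) z =
      -pder (inr A) (fun w => Ξ₁ w * G w.1 α β) z) ∧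
    (∀ z (α : Fin p) (A B : Fin q), M (inl α) (inr A) (inr B) z =
      pder (inl α) (fun w => Ξ₂ w * H w.2 A B) z) :=
  M_components_conformally_separable_general Ξ₁ Ξ₂ hΞ₁0 hΞ₂0 G H hGsym hGinv hHsym hHinv g hg₁ hg₂
    hg₃ hg₄ Γ hΓ P hP₁ hP₂ hP₃ hP₄ nab hnab M hM
end

section
/- Let p, q ≥ 1, ι = Fin p ⊕ Fin q, and let Γ : (ℝ^p × ℝ^q) → ι → ι → ι → ℝ be a differentiable family of connection coefficients, symmetric in its last two indices (Γ a b c = Γ a c b), such that Γ a b c (z) = 0 unless a, b, c all lie in the first summand (Fin p) or all lie in the second summand (Fin q). Define the curvature by R a b c d (z) := (∂_c Γ a d b)(z) − (∂_d Γ a c b)(z) + Σ_r Γ a r c (z) * Γ r d b (z) − Σ_r Γ a r d (z) * Γ r c b (z), where ∂_a is the directional derivative along the a-th standard basis vector of ℝ^p × ℝ^q. Then for all indices and all z: (i) R (inl α) (inl β) (inr F) (inl φ) (z) = (∂_{inr F} Γ (inl α) (inl φ) (inl β))(z); (ii) R (inl α) (inl β) (inr C) (inr D) (z) = 0; and (iii)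 R (inl α) (inr B) c d (z) = 0 for all c, d. -/
open Sum

/-!
A coefficient `Γ^a_{bc}` with an index outside the block of `a` vanishes. In the quadratic
terms `∑_r Γ^a_{rc} Γ^r_{db}` the summation index `r` must therefore lie in the block of `a`
(first factor) and `b, d` in the block of `r` (second factor), so these sums vanish as soon as
one of `b, c, d` leaves the block of `a`. The derivative terms vanish for the same reason,
except `∂_F Γ^α_{φβ}`, whose three indices all lie in the first block.
-/

section BlockDiagonal

variable {ι κ X R : Type*}

def IsBlockDiagonal [Zero R] (Γ : ι ⊕ κ → ι ⊕ κ → ι ⊕ κ → X → R) : Prop :=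
  ∀ a b c, (a.isLeft ≠ b.isLeft ∨ a.isLeft ≠ c.isLeft) → ∀ z, Γ a b c z = 0

theorem isBlockDiagonal_of_eq_zero_outside_blocks [Zero R] {Γ : ι ⊕ κ → ι ⊕ κ → ι ⊕ κ → X → R}
    (hΓ : ∀ a b c z,
      ¬((∃ α β γ, a = inl α ∧ b = inl β ∧ c = inl γ) ∨
        (∃ A B C, a = inr A ∧ b = inr B ∧ c = inr C)) → Γ a b c z = 0) :
    IsBlockDiagonal Γ := by
  intro a b c hne z
  apply hΓ
  rintro (⟨_, _, _, rfl, rfl, rfl⟩ | ⟨_, _, _, rfl, rfl, rfl⟩) <;> simp at hne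

theorem IsBlockDiagonal.sum_mul_eq_zero [Fintype ι] [Fintype κ] [NonUnitalNonAssocSemiring R]
    {Γ : ι ⊕ κ → ι ⊕ κ → ι ⊕ κ → X → R} (hΓ : IsBlockDiagonal Γ) {a b c d : ι ⊕ κ}
    (hne : a.isLeft ≠ b.isLeft ∨ a.isLeft ≠ c.isLeft ∨ a.isLeft ≠ d.isLeft) (z : X) :
    ∑ r, Γ a r c z * Γ r d b z = 0 := by
  refine Finset.sum_eq_zero fun r _ => ?_
  by_cases hr : a.isLeft = r.isLeft
  · rcases hne with hb | hc | hd
    · rw [hΓ r d b (Or.inr (hr ▸ hb)), mul_zero]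
    · rw [hΓ a r c (Or.inr hc), zero_mul]
    · rw [hΓ r d b (Or.inl (hr ▸ hd)), mul_zero]
  · rw [hΓ a r c (Or.inl hr), zero_mul]

end BlockDiagonal

theorem pder_eq_zero_of_forall {p q : ℕ} {f : ((Fin p → ℝ) × (Fin q → ℝ)) → ℝ}
    (hf : ∀ w, f w = 0) (a : Fin p ⊕ Fin q) (z : (Fin p → ℝ) × (Fin q → ℝ)) :
    pder a f z = 0 := by
  obtain rfl : f = 0 := funext hf
  simp [pder]

theorem curvature_block_structure_general
    {p q : ℕ}
    (Γ : (Fin p ⊕ Fin q) → (Fin p ⊕ Fin q) → (Fin p ⊕ Fin q) →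
      ((Fin p → ℝ) × (Fin q → ℝ)) → ℝ)
    (hblock : ∀ a b c z,
      ¬((∃ (α β γ : Fin p), a = inl α ∧ b = inl β ∧ c = inl γ) ∨
        (∃ (A B C : Fin q), a = inr A ∧ b = inr B ∧ c = inr C)) → Γ a b c z = 0)
    (R : (Fin p ⊕ Fin q) → (Fin p ⊕ Fin q) → (Fin p ⊕ Fin q) → (Fin p ⊕ Fin q) →
      ((Fin p → ℝ) × (Fin q → ℝ)) → ℝ)
    (hR : ∀ a b c d z, R a b c d z =
      pder c (fun w => Γ a d b w) z - pder d (fun w => Γ a c b w) z +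
      (∑ r, Γ a r c z * Γ r d b z) - ∑ r, Γ a r d z * Γ r c b z) :
    (∀ (α β : Fin p) (F : Fin q) (φ : Fin p) z,
      R (inl α) (inl β) (inr F) (inl φ) z = pder (inr F) (fun w => Γ (inl α) (inl φ) (inl β) w) z) ∧
    (∀ (α β : Fin p) (C D : Fin q) z, R (inl α) (inl β) (inr C) (inr D) z = 0) ∧
    (∀ (α : Fin p) (B : Fin q) (c d : Fin p ⊕ Fin q) z,
      R (inl α) (inr B) c d z = 0) := by
  have hΓ := isBlockDiagonal_of_eq_zero_outside_blocks hblock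
  have hpder : ∀ a b c e z, (a.isLeft ≠ b.isLeft ∨ a.isLeft ≠ c.isLeft) →
      pder e (fun w => Γ a b c w) z = 0 :=
    fun a b c e z hne => pder_eq_zero_of_forall (hΓ a b c hne) e z
  refine ⟨fun α β F φ z => ?_, fun α β C D z => ?_, fun α B c d z => ?_⟩ <;>
    simp [hR, hpder, hΓ.sum_mul_eq_zero]

/-- Block structure of the curvature of a block-diagonal symmetric connection:
`R^α_{βFφ} = ∂_F Γ^α_{φβ}`, and the components `R^α_{βCD}` and `R^α_{Bcd}` vanish. -/
theorem curvature_block_structure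
    {p q : ℕ} (hp : 1 ≤ p) (hq : 1 ≤ q)
    (Γ : (Fin p ⊕ Fin q) → (Fin p ⊕ Fin q) → (Fin p ⊕ Fin q) →
      ((Fin p → ℝ) × (Fin q → ℝ)) → ℝ)
    (hdiff : ∀ a b c, Differentiable ℝ (fun z => Γ a b c z))
    (hsymm : ∀ a b c z, Γ a b c z = Γ a c b z)
    (hblock : ∀ a b c z,
      ¬((∃ (α β γ : Fin p), a = inl α ∧ b = inl β ∧ c = inl γ) ∨
        (∃ (A B C : Fin q), a = inr A ∧ b = inr B ∧ c = inr C)) → Γ a b c z = 0)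
    (R : (Fin p ⊕ Fin q) → (Fin p ⊕ Fin q) → (Fin p ⊕ Fin q) → (Fin p ⊕ Fin q) →
      ((Fin p → ℝ) × (Fin q → ℝ)) → ℝ)
    (hR : ∀ a b c d z, R a b c d z =
      pder c (fun w => Γ a d b w) z - pder d (fun w => Γ a c b w) z +
      (∑ r, Γ a r c z * Γ r d b z) - ∑ r, Γ a r d z * Γ r c b z) :
    (∀ (α β : Fin p) (F : Fin q) (φ : Fin p) z,
      R (inl α) (inl β) (inr F) (inl φ) z = pder (inr F) (fun w => Γ (inl α) (inl φ) (inl β) w) z) ∧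
    (∀ (α β : Fin p) (C D : Fin q) z, R (inl α) (inl β) (inr C) (inr D) z = 0) ∧
    (∀ (α : Fin p) (B : Fin q) (c d : Fin p ⊕ Fin q) z,
      R (inl α) (inr B) c d z = 0) :=
  curvature_block_structure_general Γ hblock R hR
end
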